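/- arXiv:2107.06624 — 2 statements merged into one kernel-verified Lean document; each statement's English description precedes it below -/
import Mathlib

section
/- With the local setup of a degree-$N$ cyclic cover $X'=\{y^N=x\}\to X$ and $G$-equivariant line bundles $V_1,V_2$ with weights $n_1/N, n_2/N$: the natural map $\pi_{\mathrm{par}*}V_1\otimes\pi_{\mathrm{par}*}V_2\to\pi_{\mathrm{par}*}(V_1\otimes V_2)$ is an isomorphism of parabolic sheaves. Explicitly, $(\pi_{\mathrm{par}*}V_1\otimes\pi_{\mathrm{par}*}V_2)_t=\mathcal{O}_X y^m e_1\otimes e_2$ for $0\leq t\leq m/N$ and $=\mathcal{O}_X x y^m e_1\otimes e_2$ for $m/N<t<1$, where $m=n_1+n_2$ if $n_1+n_2<N$ and $m=n_1+n_2-N$ otherwise. -/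
/-- local computation of the tensor product of parabolic
pushforwards: in the local model of a degree-`N` cyclic cover
`π : X' = {yᴺ = x} → X`, `char k ∤ N`, the parabolic pushforward of the
`G`-equivariant line bundle with character `n` (i.e. `σ(e) = ξ^{-n} e`) has
`t`-th piece spanned (as a `k`-space inside `k(y) = RatFunc k`, where `u = y` and
`x = u^N`) by the monomials `u^q e` with `q ≡ n (mod N)` and `q ≥ tN` (negative
`q` encode the twists `E_{t-1} = E_t(D)`).  With `PushSet n t` this span and
`Ten t` the tensor-product filtration
`(π_{par*}V₁ ⊗ π_{par*}V₂)_t = span{ z₁ z₂ : z₁ ∈ (π_{par*}V₁)_{t₁}, z₂ ∈ (π_{par*}V₂)_{t₂}, t₁+t₂ = t }`,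
the natural map `π_{par*}V₁ ⊗ π_{par*}V₂ → π_{par*}(V₁ ⊗ V₂)` is an isomorphism
of parabolic sheaves (the filtrations agree: `Ten t = Push (n₁+n₂) t`), and
explicitly `Ten t = O_X·y^m (e₁ ⊗ e₂)` for `0 ≤ t ≤ m/N` and
`Ten t = O_X·x y^m (e₁ ⊗ e₂)` for `m/N < t < 1`, where `m = n₁ + n₂` if
`n₁ + n₂ < N` and `m = n₁ + n₂ - N` otherwise. -/
theorem stmt_6 {k : Type} [Field k] (N : ℕ) (hN : 0 < N)
    (hchar : (N : k) ≠ 0) (n1 n2 : ℕ) (h1 : n1 < N) (h2 : n2 < N) :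
    let u : RatFunc k := RatFunc.X
    let PushSet : ℤ → ℝ → Set (RatFunc k) := fun n t =>
      {z | ∃ q : ℤ, t * N ≤ (q : ℝ) ∧ (N : ℤ) ∣ q - n ∧ z = u ^ q}
    let Push : ℤ → ℝ → Submodule k (RatFunc k) := fun n t =>
      Submodule.span k (PushSet n t)
    let Ten : ℝ → Submodule k (RatFunc k) := fun t =>
      Submodule.span k
        {z | ∃ t1 t2 : ℝ, t1 + t2 = t ∧
          ∃ z1 ∈ PushSet n1 t1, ∃ z2 ∈ PushSet n2 t2, z = z1 * z2}
    let m : ℕ := if n1 + n2 < N then n1 + n2 else n1 + n2 - N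
    (∀ t : ℝ, 0 ≤ t → t < 1 → Ten t = Push ((n1 : ℤ) + n2) t) ∧
    (∀ t : ℝ, 0 ≤ t → t * N ≤ m →
      Ten t = Submodule.span k {z | ∃ a : ℕ, z = u ^ (m + a * N)}) ∧
    (∀ t : ℝ, (m : ℝ) / N < t → t < 1 →
      Ten t = Submodule.span k {z | ∃ a : ℕ, z = u ^ (m + N + a * N)}) := by
  intro u PushSet Push Ten m
  have hu : u ≠ 0 := RatFunc.X_ne_zero
  have hNR : (0:ℝ) < N := by exact_mod_cast hN
  have hmN : m < N := by simp only [m]; split <;> omega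
  have hm2 : (m:ℤ) = n1 + n2 ∨ (m:ℤ) = (n1:ℤ) + n2 - N := by
    simp only [m]; split
    · left; push_cast; ring
    · right; push_cast [Nat.cast_sub (by omega : N ≤ n1 + n2)]; omega
  have keyset : ∀ t : ℝ,
      {z | ∃ t1 t2 : ℝ, t1 + t2 = t ∧
        ∃ z1 ∈ PushSet n1 t1, ∃ z2 ∈ PushSet n2 t2, z = z1 * z2}
      = PushSet ((n1:ℤ) + n2) t := by
    intro t
    ext z
    constructor
    · rintro ⟨t1, t2, ht, z1, ⟨q1, hq1, hd1, rfl⟩, z2, ⟨q2, hq2, hd2, rfl⟩, rfl⟩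
      refine ⟨q1 + q2, ?_, ?_, ?_⟩
      · push_cast
        calc t * N = t1 * N + t2 * N := by rw [← ht]; ring
          _ ≤ q1 + q2 := add_le_add hq1 hq2
      · have h : q1 + q2 - ((n1:ℤ) + n2) = (q1 - n1) + (q2 - n2) := by ring
        rw [h]; exact dvd_add hd1 hd2
      · rw [zpow_add₀ hu]
    · rintro ⟨q, hq, hd, rfl⟩
      refine ⟨(t * N - q + n1) / N, t - (t * N - q + n1) / N, by ring,
        u ^ (n1:ℤ), ⟨n1, ?_, by simp, rfl⟩, u ^ (q - n1), ⟨q - n1, ?_, ?_, rfl⟩, ?_⟩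
      · rw [div_mul_cancel₀ _ (ne_of_gt hNR)]; push_cast; linarith
      · rw [sub_mul, div_mul_cancel₀ _ (ne_of_gt hNR)]; push_cast; linarith
      · have h : q - n1 - n2 = q - ((n1:ℤ) + n2) := by ring
        rw [h]; exact hd
      · rw [← zpow_add₀ hu]; ring_nf
  have key : ∀ t : ℝ, Ten t = Push ((n1:ℤ) + n2) t := fun t => by
    simp only [Ten, Push]; rw [keyset t]
  refine ⟨fun t _ _ => key t, ?_, ?_⟩
  · intro t ht htm
    rw [key t]
    simp only [Push]
    have hset : PushSet ((n1:ℤ) + n2) t = {z | ∃ a : ℕ, z = u ^ (m + a * N)} := by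
      ext z
      constructor
      · rintro ⟨q, hq, hd, rfl⟩
        have hq0 : (0:ℤ) ≤ q := by
          have : (0:ℝ) ≤ (q:ℝ) := le_trans (mul_nonneg ht hNR.le) hq
          exact_mod_cast this
        obtain ⟨b, hb⟩ := hd
        have hqm : ∃ c : ℤ, q - m = c * N := by
          rcases hm2 with h | h
          · exact ⟨b, by rw [h]; linear_combination hb⟩
          · exact ⟨b + 1, by rw [h]; linear_combination hb⟩
        obtain ⟨c, hc⟩ := hqm
        have hc0 : 0 ≤ c := by
          by_contra hcn
          push_neg at hcn
          have h1 : c ≤ -1 := by omega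
          have : c * N ≤ (-1) * N :=
            mul_le_mul_of_nonneg_right h1 (by exact_mod_cast hN.le)
          have hmNZ : (m:ℤ) < N := by exact_mod_cast hmN
          omega
        refine ⟨c.toNat, ?_⟩
        have hq' : q = ((m + c.toNat * N : ℕ) : ℤ) := by
          push_cast [Int.toNat_of_nonneg hc0]; linarith [hc]
        rw [hq', zpow_natCast]
      · rintro ⟨a, rfl⟩
        refine ⟨((m + a * N : ℕ) : ℤ), ?_, ?_, (zpow_natCast u _).symm⟩
        · push_cast
          have : (0:ℝ) ≤ (a:ℝ) * N := by positivity
          linarith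
        · rcases hm2 with h | h
          · exact ⟨a, by push_cast; linear_combination h⟩
          · exact ⟨a - 1, by push_cast; linear_combination h⟩
    rw [hset]
  · intro t htm ht1
    rw [key t]
    simp only [Push]
    have htN : (m:ℝ) < t * N := by
      rw [div_lt_iff₀ hNR] at htm; exact htm
    have hset : PushSet ((n1:ℤ) + n2) t = {z | ∃ a : ℕ, z = u ^ (m + N + a * N)} := by
      ext z
      constructor
      · rintro ⟨q, hq, hd, rfl⟩
        have hqm0 : (m:ℤ) < q := by
          have : (m:ℝ) < (q:ℝ) := lt_of_lt_of_le htN hq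
          exact_mod_cast this
        obtain ⟨b, hb⟩ := hd
        have hqm : ∃ c : ℤ, q - m = c * N := by
          rcases hm2 with h | h
          · exact ⟨b, by rw [h]; linear_combination hb⟩
          · exact ⟨b + 1, by rw [h]; linear_combination hb⟩
        obtain ⟨c, hc⟩ := hqm
        have hc1 : 1 ≤ c := by
          by_contra hcn
          push_neg at hcn
          have h1 : c ≤ 0 := by omega
          have : c * N ≤ 0 * N :=
            mul_le_mul_of_nonneg_right h1 (by exact_mod_cast hN.le)
          omega
        refine ⟨(c - 1).toNat, ?_⟩
        have hq' : q = ((m + N + (c - 1).toNat * N : ℕ) : ℤ) := by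
          push_cast [Int.toNat_of_nonneg (by omega : (0:ℤ) ≤ c - 1)]
          linear_combination hc
        rw [hq', zpow_natCast]
      · rintro ⟨a, rfl⟩
        refine ⟨((m + N + a * N : ℕ) : ℤ), ?_, ?_, (zpow_natCast u _).symm⟩
        · push_cast
          have h0 : (0:ℝ) ≤ (a:ℝ) * N := by positivity
          have h3 : t * N < 1 * N := mul_lt_mul_of_pos_right ht1 hNR
          linarith
        · rcases hm2 with h | h
          · exact ⟨a + 1, by push_cast; linear_combination h⟩
          · exact ⟨a, by push_cast; linear_combination h⟩
    rw [hset]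
end

section
/- Let $I_{Fil,\bullet}$ be the maximal destabilizer of the graded parabolic 0-connection $Gr_{Fil}(E_\bullet,\nabla)=(\bigoplus_{i=0}^n E^i_\bullet,\theta)$. Then $I_{Fil,\bullet}$ is graded: for $0\leq t<1$, $I_{Fil,t}=\bigoplus_{i=0}^n I^i_{Fil,t}$ with $I^i_{Fil,t}=I_{Fil,0}\cap E^i_t$; in particular $I^i_{Fil,t}=I^i_{Fil,0}\cap E^i_t$. -/
/-- STATEMENT 11 (the maximal destabilizer of a graded object is graded), in a
local module-theoretic model at a fixed parabolic index: the graded parabolic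
`0`-connection `Gr_{Fil}(E_•, ∇) = (⊕_{i=0}^n E^i, θ)` is a module `M` with a
direct sum decomposition by the submodules `C i` (`i : Fin (n+1)`);
`P J` expresses that a submodule `J ⊆ M` is a `θ`-invariant parabolic subsheaf
and `μ J` is its parabolic slope.  `I` is the maximal destabilizer: the unique
maximal `θ`-invariant parabolic subsheaf of maximal slope (`hmax`).  The grading
`𝔾_m`-action is witnessed by automorphisms `e c` (for units `c` of the infinite
base field `k ⊆ R`) scaling `C i` by `c^i`; `P` and `μ` are invariant under them.
Conclusion: `I` is graded, `I = ⨁_i (I ⊓ C i)`. -/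
theorem stmt_11 {k R M : Type} [Field k] [Infinite k] [CommRing R] [Algebra k R]
    [AddCommGroup M] [Module R M]
    (n : ℕ) (C : Fin (n + 1) → Submodule R M)
    (hCsup : (⨆ i, C i) = ⊤) (hCind : iSupIndep C)
    (P : Submodule R M → Prop) (μ : Submodule R M → ℝ)
    (I : Submodule R M)
    (hmax : P I ∧ ∀ J, P J → μ J < μ I ∨ (μ J = μ I ∧ J ≤ I))
    (e : kˣ → (M ≃ₗ[R] M))
    (he : ∀ (c : kˣ) (i : Fin (n + 1)), ∀ x ∈ C i,
      e c x = (algebraMap k R (c : k)) ^ (i : ℕ) • x)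
    (hP : ∀ (c : kˣ) (J : Submodule R M), P J →
      P (Submodule.map ((e c : M →ₗ[R] M)) J))
    (hμ : ∀ (c : kˣ) (J : Submodule R M),
      μ (Submodule.map ((e c : M →ₗ[R] M)) J) = μ J) :
    I = ⨆ i, I ⊓ C i := by
  classical
  -- choose c : k, nonzero, with c^d ≠ 1 for 1 ≤ d ≤ n
  obtain ⟨c, hc⟩ : ∃ c : k, c ∉ ({0} ∪ ⋃ d ∈ Finset.Icc 1 n, {x : k | x ^ d = 1}) := by
    have hfin : Set.Finite ({0} ∪ ⋃ d ∈ Finset.Icc 1 n, {x : k | x ^ d = 1}) := by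
      refine Set.Finite.union (Set.finite_singleton 0) ?_
      refine Set.Finite.biUnion (Finset.Icc 1 n).finite_toSet (fun d hd => ?_)
      have hd1 : 1 ≤ d := (Finset.mem_Icc.mp hd).1
      have : {x : k | x ^ d = 1} ⊆ {x : k | (Polynomial.X ^ d - 1 : Polynomial k).IsRoot x} := by
        intro x hx
        simp only [Set.mem_setOf_eq, Polynomial.IsRoot, Polynomial.eval_sub,
          Polynomial.eval_pow, Polynomial.eval_X, Polynomial.eval_one, sub_eq_zero]
        exact hx
      refine Set.Finite.subset (Polynomial.finite_setOf_isRoot ?_) this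
      intro h
      have h0 := congrArg (Polynomial.eval 0) h
      simp [zero_pow (by omega : d ≠ 0)] at h0
    exact (hfin.infinite_compl.nonempty).imp (fun c hc => hc)
  rw [Set.mem_union, not_or, Set.mem_singleton_iff] at hc
  obtain ⟨hc0, hcd⟩ := hc
  have hcd' : ∀ d : ℕ, 1 ≤ d → d ≤ n → c ^ d ≠ 1 := by
    intro d h1 h2 h
    exact hcd (Set.mem_biUnion (Finset.mem_Icc.mpr ⟨h1, h2⟩) h)
  -- distinct powers
  have hpow : ∀ i j : Fin (n + 1), i ≠ j → c ^ (i : ℕ) ≠ c ^ (j : ℕ) := by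
    have key : ∀ i j : ℕ, i < j → j ≤ n → c ^ i ≠ c ^ j := by
      intro i j hij hj h
      have : c ^ i * c ^ (j - i) = c ^ i * 1 := by
        rw [mul_one, ← pow_add]
        rw [h]; congr 1; omega
      have := mul_left_cancel₀ (pow_ne_zero i hc0) this
      exact hcd' (j - i) (by omega) (by omega) this
    intro i j hij h
    rcases lt_or_gt_of_ne (fun hv => hij (Fin.val_injective hv) :
        (i : ℕ) ≠ (j : ℕ)) with hlt | hlt
    · exact key i j hlt (Nat.lt_succ_iff.mp j.isLt) h
    · exact key j i hlt (Nat.lt_succ_iff.mp i.isLt) h.symm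
  set cu : kˣ := Units.mk0 c hc0 with hcu
  set f : M →ₗ[R] M := (e cu : M →ₗ[R] M) with hf
  -- f preserves I
  have hI : ∀ x ∈ I, f x ∈ I := by
    intro x hx
    have hPm := hP cu I hmax.1
    rcases hmax.2 _ hPm with h | h
    · rw [hμ] at h; exact absurd h (lt_irrefl _)
    · exact h.2 ⟨x, hx, rfl⟩
  set r : Fin (n + 1) → R := fun m => (algebraMap k R c) ^ (m : ℕ) with hr
  have hfC : ∀ (m : Fin (n + 1)), ∀ y ∈ C m, f y = r m • y := fun m y hy => he cu m y hy
  have hunit : ∀ i j : Fin (n + 1), i ≠ j → IsUnit (r i - r j) := by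
    intro i j hij
    have : r i - r j = algebraMap k R (c ^ (i : ℕ) - c ^ (j : ℕ)) := by
      simp [hr, map_sub, map_pow]
    rw [this]
    exact (isUnit_iff_ne_zero.mpr (sub_ne_zero_of_ne (hpow i j hij))).map (algebraMap k R)
  -- key induction
  have key : ∀ s : Finset (Fin (n + 1)), ∀ x : Fin (n + 1) → M,
      (∀ m, x m ∈ C m) → (∑ m ∈ s, x m) ∈ I → ∀ m ∈ s, x m ∈ I := by
    intro s
    induction s using Finset.induction_on with
    | empty => intro x _ _ m hm; exact absurd hm (Finset.notMem_empty m)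
    | @insert a s ha ih =>
      intro x hxC hxI m hm
      set y := ∑ m ∈ insert a s, x m with hy
      have hfy : f y - r a • y ∈ I := sub_mem (hI y hxI) (I.smul_mem _ hxI)
      have hcalc : f y - r a • y = ∑ m ∈ s, (r m - r a) • x m := by
        rw [hy, map_sum, Finset.smul_sum, ← Finset.sum_sub_distrib,
          Finset.sum_insert ha, hfC a (x a) (hxC a), sub_self, zero_add]
        exact Finset.sum_congr rfl fun m hm => by
          rw [hfC m (x m) (hxC m), sub_smul]
      have hscaled : ∀ m ∈ s, (r m - r a) • x m ∈ I := by
        refine ih (fun m => (r m - r a) • x m) (fun m => (C m).smul_mem _ (hxC m)) ?_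
        rw [← hcalc]; exact hfy
      have hmem : ∀ m ∈ s, x m ∈ I := by
        intro m hms
        obtain ⟨u, hu⟩ := hunit m a (fun h => ha (h ▸ hms))
        have := I.smul_mem (↑u⁻¹ : R) (hscaled m hms)
        rwa [← hu, smul_smul, Units.inv_mul, one_smul] at this
      rcases Finset.mem_insert.mp hm with rfl | hms
      · have : x m = y - ∑ m' ∈ s, x m' := by rw [hy, Finset.sum_insert ha]; abel
        rw [this]
        exact sub_mem hxI (Submodule.sum_mem I hmem)
      · exact hmem m hms
  -- conclude
  refine le_antisymm ?_ (iSup_le fun i => inf_le_left)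
  intro x hx
  have hxtop : x ∈ ⨆ i, C i := hCsup ▸ Submodule.mem_top
  rw [Submodule.mem_iSup_iff_exists_finsupp] at hxtop
  obtain ⟨v, hvC, hvsum⟩ := hxtop
  have hsum : ∑ m, v m = x := by
    rw [← hvsum, Finsupp.sum_fintype]; exact fun _ => rfl
  have hvI : ∀ m, v m ∈ I := by
    intro m
    exact key Finset.univ (fun m => v m) hvC (hsum ▸ hx) m (Finset.mem_univ m)
  rw [← hsum]
  exact Submodule.sum_mem _ fun m _ =>
    Submodule.mem_iSup_of_mem m (Submodule.mem_inf.mpr ⟨hvI m, hvC m⟩)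
end
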